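/- Fix K > 0 and α ∈ (1/2, 1). For every t > 0 the function y ↦ q*(t,y) is twice continuously differentiable on (0,∞), with derivatives obtained by differentiation under the integral sign: ∂_y q*(t,y) = (Γ(α)Γ(1−α))^{−1} ∫₀¹ ∂_y q_BS(τ t, y) τ^{α−1}(1−τ)^{−α} dτ and ∂²_y q*(t,y) = (Γ(α)Γ(1−α))^{−1} ∫₀¹ ∂²_y q_BS(τ t, y) τ^{α−1}(1−τ)^{−α} dτ. Moreover 0 ≤ ∂_y q*(t,y) ≤ 1 and 0 ≤ (y²/2) ∂²_y q*(t,y) ≤ ( Γ(α − 1/2)/(2π Γ(α)) ) √( K y / (2t) ) for all t, y > 0. -/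

import Mathlib

open MeasureTheory Set

/-- Standard normal cumulative distribution function. -/
noncomputable def normCdf (z : ℝ) : ℝ :=
  (Real.sqrt (2 * Real.pi))⁻¹ * ∫ u in Set.Iic z, Real.exp (-u ^ 2 / 2)

/-- The Black–Scholes call price function with strike `K`. -/
noncomputable def qBS (K t y : ℝ) : ℝ :=
  y * normCdf ((2 * Real.log (y / K) + t) / (2 * Real.sqrt t))
    - K * normCdf ((2 * Real.log (y / K) - t) / (2 * Real.sqrt t))

/-- The time-changed Black–Scholes price
`q*(t,y) = (Γ(α)Γ(1−α))⁻¹ ∫₀¹ s^{α−1}(1−s)^{−α} q_BS(ts,y) ds` for `t > 0`,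
with `q*(0,y) = (y−K)₊`. -/
noncomputable def qStar (K α t y : ℝ) : ℝ :=
  if t = 0 then max (y - K) 0
  else (Real.Gamma α * Real.Gamma (1 - α))⁻¹ *
    ∫ s in Set.Ioo (0 : ℝ) 1, s ^ (α - 1) * (1 - s) ^ (-α) * qBS K (t * s) y

/-!
With `d₊ = (2 log (y/K) + t) / (2√t)` one has `q_BS = y Φ(d₊) − K Φ(d₊ − √t)` and
`y φ(d₊) = K φ(d₊ − √t)`, so the Black–Scholes delta is `∂_y q_BS = Φ(d₊) ∈ [0, 1]`
and the gamma is `∂²_y q_BS = φ(d₊) / (y √t)`. For `y` in a neighbourhood bounded away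
from `0` the gamma at time `t s` is at most a constant times `s^{-1/2}`, which is
integrable against `s^{α-1} (1-s)^{-α}` because `α > 1/2`; dominated convergence
therefore lets us differentiate twice under the integral sign and gives continuity of the
second derivative. The bounds come from the Beta integrals `B(α, 1-α) = Γ(α) Γ(1-α)` and
`B(α - 1/2, 1-α) = Γ(α - 1/2) Γ(1-α) / √π`, together with `y φ(d₊) ≤ √(K y / (2π))`,
obtained by squaring and using the identity above.
-/

open Real Filter Topology

section Calculus

variable {𝕜 F : Type*} [NontriviallyNormedField 𝕜] [NormedAddCommGroup F] [NormedSpace 𝕜 F]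
  {f f' f'' : 𝕜 → F} {s : Set 𝕜}

lemma deriv_deriv_eq_of_hasDerivAt (hs : IsOpen s) (hf : ∀ x ∈ s, HasDerivAt f (f' x) x)
    (hf' : ∀ x ∈ s, HasDerivAt f' (f'' x) x) {x : 𝕜} (hx : x ∈ s) :
    deriv (deriv f) x = f'' x := by
  have : deriv f =ᶠ[𝓝 x] f' := eventually_of_mem (hs.mem_nhds hx) fun z hz => (hf z hz).deriv
  rw [this.deriv_eq, (hf' x hx).deriv]

lemma contDiffOn_two_of_hasDerivAt (hs : IsOpen s) (hf : ∀ x ∈ s, HasDerivAt f (f' x) x)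
    (hf' : ∀ x ∈ s, HasDerivAt f' (f'' x) x) (hf'' : ContinuousOn f'' s) :
    ContDiffOn 𝕜 2 f s := by
  have hderiv : ∀ {g g' : 𝕜 → F}, (∀ x ∈ s, HasDerivAt g (g' x) x) →
      EqOn (deriv g) g' s :=
    fun hg x hx => (hg x hx).deriv
  have hf'1 : ContDiffOn 𝕜 1 f' s := by
    rw [show (1 : WithTop ℕ∞) = 0 + 1 from rfl, contDiffOn_succ_iff_deriv_of_isOpen hs]
    exact ⟨fun x hx => (hf' x hx).differentiableAt.differentiableWithinAt, by simp,
      contDiffOn_zero.2 (hf''.congr (hderiv hf'))⟩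
  rw [show (2 : WithTop ℕ∞) = 1 + 1 from rfl, contDiffOn_succ_iff_deriv_of_isOpen hs]
  exact ⟨fun x hx => (hf x hx).differentiableAt.differentiableWithinAt, by simp,
    hf'1.congr (hderiv hf)⟩

end Calculus

section Gaussian

noncomputable def normPdf (z : ℝ) : ℝ :=
  (√(2 * π))⁻¹ * exp (-z ^ 2 / 2)

lemma exp_neg_sq_div_two_eq (u : ℝ) : exp (-u ^ 2 / 2) = exp (-(1 / 2) * u ^ 2) := by
  ring_nf

lemma integrable_exp_neg_sq_div_two : Integrable fun u : ℝ => exp (-u ^ 2 / 2) := by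
  simpa only [exp_neg_sq_div_two_eq] using
    integrable_exp_neg_mul_sq (by norm_num : (0 : ℝ) < 1 / 2)

lemma integral_exp_neg_sq_div_two : ∫ u : ℝ, exp (-u ^ 2 / 2) = √(2 * π) := by
  simp only [exp_neg_sq_div_two_eq, integral_gaussian]
  congr 1
  field_simp

lemma hasDerivAt_normCdf (z : ℝ) : HasDerivAt normCdf (normPdf z) z := by
  have hint := integrable_exp_neg_sq_div_two.integrableOn (s := Iic (0 : ℝ))
  have hsplit : normCdf = fun x => (√(2 * π))⁻¹ *
      ((∫ u in Iic 0, exp (-u ^ 2 / 2)) + ∫ u in (0 : ℝ)..x, exp (-u ^ 2 / 2)) := by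
    ext x
    rw [normCdf, ← intervalIntegral.integral_Iic_sub_Iic hint
      integrable_exp_neg_sq_div_two.integrableOn, add_sub_cancel]
  have hcont : Continuous fun u : ℝ => exp (-u ^ 2 / 2) := by fun_prop
  rw [hsplit]
  exact ((intervalIntegral.integral_hasDerivAt_right
    integrable_exp_neg_sq_div_two.intervalIntegrable (hcont.stronglyMeasurableAtFilter _ _)
    hcont.continuousAt).const_add _).const_mul _

lemma continuous_normCdf : Continuous normCdf :=
  continuous_iff_continuousAt.2 fun z => (hasDerivAt_normCdf z).continuousAt

@[fun_prop]
lemma measurable_normCdf : Measurable normCdf := continuous_normCdf.measurable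

lemma normCdf_nonneg (z : ℝ) : 0 ≤ normCdf z :=
  mul_nonneg (by positivity) (setIntegral_nonneg measurableSet_Iic fun _ _ => (exp_pos _).le)

lemma normCdf_le_one (z : ℝ) : normCdf z ≤ 1 := by
  have hpos : 0 < √(2 * π) := by positivity
  calc normCdf z ≤ (√(2 * π))⁻¹ * ∫ u : ℝ, exp (-u ^ 2 / 2) := by
        refine mul_le_mul_of_nonneg_left ?_ (by positivity)
        exact setIntegral_le_integral integrable_exp_neg_sq_div_two
          (Eventually.of_forall fun _ => (exp_pos _).le)
    _ = 1 := by rw [integral_exp_neg_sq_div_two, inv_mul_cancel₀ hpos.ne']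

lemma continuous_normPdf : Continuous normPdf := by
  unfold normPdf; fun_prop

@[fun_prop]
lemma measurable_normPdf : Measurable normPdf := continuous_normPdf.measurable

lemma normPdf_nonneg (z : ℝ) : 0 ≤ normPdf z := by
  unfold normPdf; positivity

lemma normPdf_le (z : ℝ) : normPdf z ≤ (√(2 * π))⁻¹ := by
  unfold normPdf
  refine mul_le_of_le_one_right (by positivity) (exp_le_one_iff.2 ?_)
  nlinarith [sq_nonneg z]

end Gaussian

section BlackScholes

variable {K t y : ℝ}

noncomputable def dPlus (K t y : ℝ) : ℝ :=
  (2 * log (y / K) + t) / (2 * √t)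

noncomputable def bsGamma (K t y : ℝ) : ℝ :=
  normPdf (dPlus K t y) / (y * √t)

lemma qBS_eq_dPlus (K t y : ℝ) :
    qBS K t y = y * normCdf (dPlus K t y) - K * normCdf (dPlus K t y - √t) := by
  have h : (2 * log (y / K) - t) / (2 * √t) = dPlus K t y - t / √t := by
    rw [dPlus]; field_simp; ring
  rw [qBS, h, div_sqrt, dPlus]

lemma hasDerivAt_dPlus (hK : K ≠ 0) (hy : y ≠ 0) :
    HasDerivAt (dPlus K t) (1 / (y * √t)) y := by
  have hlog : HasDerivAt (fun z => log (z / K)) (1 / y) y := by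
    refine (((hasDerivAt_id' y).div_const K).log (div_ne_zero hy hK)).congr_deriv ?_
    field_simp
  refine (((hlog.const_mul 2).add_const t).div_const (2 * √t)).congr_deriv ?_
  rw [mul_div_mul_left _ _ two_ne_zero, div_div]

lemma mul_normPdf_dPlus (hK : 0 < K) (ht : 0 < t) (hy : 0 < y) :
    y * normPdf (dPlus K t y) = K * normPdf (dPlus K t y - √t) := by
  have hexp : -(dPlus K t y - √t) ^ 2 / 2 = -dPlus K t y ^ 2 / 2 + log (y / K) := by
    have hsq : √t ^ 2 = t := sq_sqrt ht.le
    have hprod : dPlus K t y * √t = log (y / K) + t / 2 := by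
      rw [dPlus]
      field_simp
    linear_combination hprod - hsq / 2
  rw [normPdf, normPdf, hexp, exp_add, exp_log (div_pos hy hK)]
  field_simp

lemma hasDerivAt_qBS (hK : 0 < K) (ht : 0 < t) (hy : 0 < y) :
    HasDerivAt (qBS K t) (normCdf (dPlus K t y)) y := by
  have hd := hasDerivAt_dPlus (t := t) hK.ne' hy.ne'
  have h := ((hasDerivAt_id' y).mul ((hasDerivAt_normCdf _).comp y hd)).sub
    (((hasDerivAt_normCdf _).comp y (hd.sub_const (√t))).const_mul K)
  rw [funext (qBS_eq_dPlus K t)]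
  refine h.congr_deriv ?_
  rw [← mul_assoc, mul_normPdf_dPlus hK ht hy, Function.comp_apply]
  ring

lemma hasDerivAt_normCdf_dPlus (hK : K ≠ 0) (hy : y ≠ 0) :
    HasDerivAt (fun z => normCdf (dPlus K t z)) (bsGamma K t y) y := by
  refine ((hasDerivAt_normCdf _).comp y (hasDerivAt_dPlus (t := t) hK hy)).congr_deriv ?_
  rw [bsGamma, mul_one_div]

lemma continuousAt_bsGamma (hK : K ≠ 0) (ht : 0 < t) (hy : y ≠ 0) :
    ContinuousAt (bsGamma K t) y :=
  (continuous_normPdf.continuousAt.comp (hasDerivAt_dPlus hK hy).continuousAt).div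
    (by fun_prop) (mul_ne_zero hy (sqrt_pos.2 ht).ne')

lemma deriv_qBS (hK : 0 < K) (ht : 0 < t) (hy : 0 < y) :
    deriv (qBS K t) y = normCdf (dPlus K t y) :=
  (hasDerivAt_qBS hK ht hy).deriv

lemma deriv_deriv_qBS (hK : 0 < K) (ht : 0 < t) (hy : 0 < y) :
    deriv (deriv (qBS K t)) y = bsGamma K t y :=
  deriv_deriv_eq_of_hasDerivAt isOpen_Ioi (fun _ hx => hasDerivAt_qBS hK ht hx)
    (fun _ hx => hasDerivAt_normCdf_dPlus hK.ne' (ne_of_gt hx)) hy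

lemma bsGamma_nonneg (hy : 0 ≤ y) : 0 ≤ bsGamma K t y :=
  div_nonneg (normPdf_nonneg _) (by positivity)

lemma bsGamma_le (hy : 0 ≤ y) : bsGamma K t y ≤ (√(2 * π))⁻¹ / (y * √t) :=
  div_le_div_of_nonneg_right (normPdf_le _) (by positivity)

lemma mul_normPdf_dPlus_le (hK : 0 < K) (ht : 0 < t) (hy : 0 < y) :
    y * normPdf (dPlus K t y) ≤ √(K * y / (2 * π)) := by
  refine le_sqrt_of_sq_le ?_
  have hφ : normPdf (dPlus K t y) * normPdf (dPlus K t y - √t) ≤ (√(2 * π))⁻¹ ^ 2 := by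
    rw [sq]
    exact mul_le_mul (normPdf_le _) (normPdf_le _) (normPdf_nonneg _) (by positivity)
  calc (y * normPdf (dPlus K t y)) ^ 2
      = K * y * (normPdf (dPlus K t y) * normPdf (dPlus K t y - √t)) := by
        rw [sq]; nth_rewrite 2 [mul_normPdf_dPlus hK ht hy]; ring
    _ ≤ K * y * (√(2 * π))⁻¹ ^ 2 := mul_le_mul_of_nonneg_left hφ (by positivity)
    _ = K * y / (2 * π) := by rw [inv_pow, sq_sqrt (by positivity), div_eq_mul_inv]

lemma half_sq_mul_bsGamma_le (hK : 0 < K) (ht : 0 < t) (hy : 0 < y) :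
    y ^ 2 / 2 * bsGamma K t y ≤ √(K * y / (2 * t)) / (2 * √π) := by
  have hst : 0 < √t := sqrt_pos.2 ht
  calc y ^ 2 / 2 * bsGamma K t y = y * normPdf (dPlus K t y) / (2 * √t) := by
        rw [bsGamma]; field_simp
    _ ≤ √(K * y / (2 * π)) / (2 * √t) := by
        gcongr; exact mul_normPdf_dPlus_le hK ht hy
    _ = √(K * y / (2 * t)) / (2 * √π) := by
        rw [sqrt_div' _ (by positivity), sqrt_div' _ (by positivity), sqrt_mul zero_le_two,
          sqrt_mul zero_le_two]
        field_simp

end BlackScholes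

section Beta

open ProbabilityTheory

variable {a b : ℝ}

lemma integrableOn_and_setIntegral_rpow_mul_one_sub_rpow (ha : 0 < a) (hb : 0 < b) :
    IntegrableOn (fun s : ℝ => s ^ (a - 1) * (1 - s) ^ (b - 1)) (Ioo 0 1) ∧
      ∫ s in Ioo (0 : ℝ) 1, s ^ (a - 1) * (1 - s) ^ (b - 1) = beta a b := by
  set f : ℝ → ℝ := fun s => s ^ (a - 1) * (1 - s) ^ (b - 1)
  have hB := beta_pos ha hb
  have hone := lintegral_betaPDF_eq_one ha hb
  rw [lintegral_betaPDF] at hone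
  have hg : 0 ≤ᵐ[volume.restrict (Ioo 0 1)] fun s => 1 / beta a b * f s := by
    refine ae_restrict_of_forall_mem measurableSet_Ioo fun s hs => ?_
    exact mul_nonneg (by positivity) (mul_nonneg (rpow_nonneg hs.1.le _)
      (rpow_nonneg (by linarith [hs.2]) _))
  have hmeas : AEStronglyMeasurable (fun s => 1 / beta a b * f s)
      (volume.restrict (Ioo 0 1)) :=
    Measurable.aestronglyMeasurable (by fun_prop)
  have hint : IntegrableOn (fun s => 1 / beta a b * f s) (Ioo 0 1) := by
    refine ⟨hmeas, (hasFiniteIntegral_iff_ofReal hg).2 ?_⟩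
    simp only [f, ← mul_assoc, hone, ENNReal.one_lt_top]
  have hval : ∫ s in Ioo (0 : ℝ) 1, 1 / beta a b * f s = 1 := by
    rw [integral_eq_lintegral_of_nonneg_ae hg hmeas]
    simp only [f, ← mul_assoc, hone, ENNReal.toReal_one]
  refine ⟨?_, ?_⟩
  · have h := hint.const_mul (beta a b)
    simp only [← mul_assoc, mul_one_div_cancel hB.ne', one_mul] at h
    exact h
  · rw [integral_const_mul] at hval
    field_simp at hval
    exact hval

end Beta

section BetaKernel

open ProbabilityTheory

variable {α s : ℝ}

noncomputable def betaKernel (α s : ℝ) : ℝ :=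
  s ^ (α - 1) * (1 - s) ^ (-α)

lemma betaKernel_nonneg (hs : s ∈ Ioo 0 1) : 0 ≤ betaKernel α s :=
  mul_nonneg (rpow_nonneg hs.1.le _) (rpow_nonneg (by linarith [hs.2]) _)

@[fun_prop]
lemma measurable_betaKernel : Measurable (betaKernel α) := by
  unfold betaKernel; fun_prop

lemma betaKernel_eq : betaKernel α = fun s => s ^ (α - 1) * (1 - s) ^ ((1 - α) - 1) := by
  ext s; rw [betaKernel, sub_sub_cancel_left]

lemma betaKernel_div_sqrt (hs : 0 < s) :
    betaKernel α s / √s = s ^ ((α - 1 / 2) - 1) * (1 - s) ^ ((1 - α) - 1) := by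
  rw [betaKernel_eq, sqrt_eq_rpow, mul_div_right_comm, ← rpow_sub hs]
  ring_nf

section

variable (hα : α ∈ Ioo 0 1)
include hα

lemma Gamma_mul_Gamma_one_sub_pos : 0 < Gamma α * Gamma (1 - α) :=
  mul_pos (Gamma_pos_of_pos hα.1) (Gamma_pos_of_pos (by linarith [hα.2]))

lemma integrableOn_betaKernel : IntegrableOn (betaKernel α) (Ioo 0 1) := by
  rw [betaKernel_eq]
  exact (integrableOn_and_setIntegral_rpow_mul_one_sub_rpow hα.1 (by linarith [hα.2])).1

lemma setIntegral_betaKernel :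
    ∫ s in Ioo (0 : ℝ) 1, betaKernel α s = Gamma α * Gamma (1 - α) := by
  rw [betaKernel_eq, (integrableOn_and_setIntegral_rpow_mul_one_sub_rpow hα.1
    (by linarith [hα.2])).2, beta, add_sub_cancel, Gamma_one, div_one]

end

variable (hα : α ∈ Ioo (1 / 2 : ℝ) 1)
include hα

lemma integrableOn_betaKernel_div_sqrt :
    IntegrableOn (fun s => betaKernel α s / √s) (Ioo 0 1) :=
  (integrableOn_and_setIntegral_rpow_mul_one_sub_rpow (by linarith [hα.1])
    (by linarith [hα.2])).1.congr_fun (fun s hs => (betaKernel_div_sqrt hs.1).symm)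
    measurableSet_Ioo

lemma setIntegral_betaKernel_div_sqrt :
    ∫ s in Ioo (0 : ℝ) 1, betaKernel α s / √s
      = Gamma (α - 1 / 2) * Gamma (1 - α) / √π := by
  rw [setIntegral_congr_fun measurableSet_Ioo fun s hs => betaKernel_div_sqrt hs.1,
    (integrableOn_and_setIntegral_rpow_mul_one_sub_rpow (by linarith [hα.1])
    (by linarith [hα.2])).2, beta, sub_add_sub_cancel',
    show (1 : ℝ) - 1 / 2 = 1 / 2 by norm_num, Gamma_one_half_eq]

end BetaKernel

section TimeChange

variable {K α t y : ℝ}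

lemma abs_qBS_le (hK : 0 ≤ K) (hy : 0 ≤ y) (t : ℝ) : |qBS K t y| ≤ y + K := by
  rw [qBS_eq_dPlus, abs_le]
  have := normCdf_nonneg (dPlus K t y)
  have := normCdf_le_one (dPlus K t y)
  have := normCdf_nonneg (dPlus K t y - √t)
  have := normCdf_le_one (dPlus K t y - √t)
  constructor <;> nlinarith

lemma norm_betaKernel_mul_normCdf_le {s : ℝ} (hs : s ∈ Ioo 0 1) (z : ℝ) :
    ‖betaKernel α s * normCdf z‖ ≤ betaKernel α s := by
  rw [norm_mul, Real.norm_of_nonneg (betaKernel_nonneg hs),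
    Real.norm_of_nonneg (normCdf_nonneg z)]
  exact mul_le_of_le_one_right (betaKernel_nonneg hs) (normCdf_le_one z)

lemma norm_betaKernel_mul_bsGamma_le (ht : 0 < t) (hy : 0 < y) {x : ℝ} (hx : y / 2 < x)
    {s : ℝ} (hs : s ∈ Ioo 0 1) :
    ‖betaKernel α s * bsGamma K (t * s) x‖
      ≤ (√(2 * π))⁻¹ / (y / 2 * √t) * (betaKernel α s / √s) := by
  have hx0 : 0 < x := by linarith
  have hts : 0 < √(t * s) := sqrt_pos.2 (mul_pos ht hs.1)
  have hγ : bsGamma K (t * s) x ≤ (√(2 * π))⁻¹ / (y / 2 * √t) / √s :=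
    calc bsGamma K (t * s) x ≤ (√(2 * π))⁻¹ / (x * √(t * s)) := bsGamma_le hx0.le
      _ ≤ (√(2 * π))⁻¹ / (y / 2 * √(t * s)) := by gcongr
      _ = (√(2 * π))⁻¹ / (y / 2 * √t) / √s := by rw [sqrt_mul ht.le]; ring
  rw [norm_mul, Real.norm_of_nonneg (betaKernel_nonneg hs),
    Real.norm_of_nonneg (bsGamma_nonneg hx0.le)]
  calc betaKernel α s * bsGamma K (t * s) x
      ≤ betaKernel α s * ((√(2 * π))⁻¹ / (y / 2 * √t) / √s) :=
        mul_le_mul_of_nonneg_left hγ (betaKernel_nonneg hs)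
    _ = _ := by ring

lemma hasDerivAt_integral_betaKernel_mul_qBS (hK : 0 < K) (hα : α ∈ Ioo 0 1) (ht : 0 < t)
    (hy : 0 < y) :
    HasDerivAt (fun x => ∫ s in Ioo (0 : ℝ) 1, betaKernel α s * qBS K (t * s) x)
      (∫ s in Ioo (0 : ℝ) 1, betaKernel α s * normCdf (dPlus K (t * s) y)) y := by
  have hmeas : ∀ x, AEStronglyMeasurable (fun s => betaKernel α s * qBS K (t * s) x)
      (volume.restrict (Ioo 0 1)) := fun x => by
    unfold qBS; exact Measurable.aestronglyMeasurable (by fun_prop)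
  refine (hasDerivAt_integral_of_dominated_loc_of_deriv_le (bound := betaKernel α)
    (F' := fun x s => betaKernel α s * normCdf (dPlus K (t * s) x))
    (Ioi_mem_nhds hy) (Eventually.of_forall hmeas) ?_
    (Measurable.aestronglyMeasurable (by unfold dPlus; fun_prop)) ?_
    (integrableOn_betaKernel hα) ?_).2
  · refine ((integrableOn_betaKernel hα).mul_const (y + K)).mono' (hmeas y) ?_
    refine ae_restrict_of_forall_mem measurableSet_Ioo fun s hs => ?_
    rw [norm_mul, Real.norm_of_nonneg (betaKernel_nonneg hs), Real.norm_eq_abs]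
    exact mul_le_mul_of_nonneg_left (abs_qBS_le hK.le hy.le _) (betaKernel_nonneg hs)
  · exact ae_restrict_of_forall_mem measurableSet_Ioo fun s hs x _ =>
      norm_betaKernel_mul_normCdf_le hs _
  · exact ae_restrict_of_forall_mem measurableSet_Ioo fun s hs x hx =>
      (hasDerivAt_qBS hK (mul_pos ht hs.1) hx).const_mul _

lemma hasDerivAt_integral_betaKernel_mul_normCdf (hK : 0 < K) (hα : α ∈ Ioo (1 / 2) 1)
    (ht : 0 < t) (hy : 0 < y) :
    HasDerivAt (fun x => ∫ s in Ioo (0 : ℝ) 1, betaKernel α s * normCdf (dPlus K (t * s) x))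
      (∫ s in Ioo (0 : ℝ) 1, betaKernel α s * bsGamma K (t * s) y) y := by
  refine (hasDerivAt_integral_of_dominated_loc_of_deriv_le
    (F := fun x s => betaKernel α s * normCdf (dPlus K (t * s) x))
    (F' := fun x s => betaKernel α s * bsGamma K (t * s) x)
    (Ioi_mem_nhds (half_lt_self hy))
    (Eventually.of_forall fun x => Measurable.aestronglyMeasurable (by unfold dPlus; fun_prop))
    ?_ (Measurable.aestronglyMeasurable (by unfold bsGamma dPlus; fun_prop))
    (ae_restrict_of_forall_mem measurableSet_Ioo fun s hs x hx =>
      norm_betaKernel_mul_bsGamma_le ht hy hx hs)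
    ((integrableOn_betaKernel_div_sqrt hα).const_mul _) ?_).2
  · refine (integrableOn_betaKernel ⟨by linarith [hα.1], hα.2⟩).mono'
      (Measurable.aestronglyMeasurable (by unfold dPlus; fun_prop)) ?_
    exact ae_restrict_of_forall_mem measurableSet_Ioo fun s hs =>
      norm_betaKernel_mul_normCdf_le hs _
  · exact ae_restrict_of_forall_mem measurableSet_Ioo fun s hs x hx =>
      (hasDerivAt_normCdf_dPlus hK.ne' (by linarith [hx.out] : x ≠ 0)).const_mul _

lemma continuousAt_integral_betaKernel_mul_bsGamma (hK : 0 < K) (hα : α ∈ Ioo (1 / 2) 1)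
    (ht : 0 < t) (hy : 0 < y) :
    ContinuousAt (fun x => ∫ s in Ioo (0 : ℝ) 1, betaKernel α s * bsGamma K (t * s) x) y := by
  refine continuousAt_of_dominated (Eventually.of_forall fun x =>
      Measurable.aestronglyMeasurable (by unfold bsGamma dPlus; fun_prop))
    (eventually_of_mem (Ioi_mem_nhds (half_lt_self hy)) fun x hx =>
      ae_restrict_of_forall_mem measurableSet_Ioo fun s hs =>
        norm_betaKernel_mul_bsGamma_le ht hy hx hs)
    ((integrableOn_betaKernel_div_sqrt hα).const_mul _)
    (ae_restrict_of_forall_mem measurableSet_Ioo fun s hs => ?_)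
  exact continuousAt_const.mul (continuousAt_bsGamma hK.ne' (mul_pos ht hs.1) hy.ne')

lemma setIntegral_betaKernel_mul_normCdf_le (hα : α ∈ Ioo 0 1) (f : ℝ → ℝ) :
    ∫ s in Ioo (0 : ℝ) 1, betaKernel α s * normCdf (f s) ≤ Gamma α * Gamma (1 - α) := by
  rw [← setIntegral_betaKernel hα]
  refine integral_mono_of_nonneg ?_ (integrableOn_betaKernel hα) ?_
  · exact ae_restrict_of_forall_mem measurableSet_Ioo fun s hs =>
      mul_nonneg (betaKernel_nonneg hs) (normCdf_nonneg _)
  · exact ae_restrict_of_forall_mem measurableSet_Ioo fun s hs =>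
      mul_le_of_le_one_right (betaKernel_nonneg hs) (normCdf_le_one _)

lemma half_sq_mul_setIntegral_betaKernel_mul_bsGamma_le (hK : 0 < K) (hα : α ∈ Ioo (1 / 2) 1)
    (ht : 0 < t) (hy : 0 < y) :
    y ^ 2 / 2 * ∫ s in Ioo (0 : ℝ) 1, betaKernel α s * bsGamma K (t * s) y
      ≤ √(K * y / (2 * t)) / (2 * √π) * (Gamma (α - 1 / 2) * Gamma (1 - α) / √π) := by
  rw [← setIntegral_betaKernel_div_sqrt hα, ← integral_const_mul, ← integral_const_mul]
  refine integral_mono_of_nonneg ?_ ((integrableOn_betaKernel_div_sqrt hα).const_mul _) ?_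
  · exact ae_restrict_of_forall_mem measurableSet_Ioo fun s hs =>
      mul_nonneg (by positivity) (mul_nonneg (betaKernel_nonneg hs) (bsGamma_nonneg hy.le))
  refine ae_restrict_of_forall_mem measurableSet_Ioo fun s hs => ?_
  have hsqrt : √(K * y / (2 * (t * s))) = √(K * y / (2 * t)) / √s := by
    rw [← sqrt_div' _ hs.1.le, div_div, mul_assoc]
  calc y ^ 2 / 2 * (betaKernel α s * bsGamma K (t * s) y)
      = betaKernel α s * (y ^ 2 / 2 * bsGamma K (t * s) y) := by ring
    _ ≤ betaKernel α s * (√(K * y / (2 * (t * s))) / (2 * √π)) :=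
        mul_le_mul_of_nonneg_left (half_sq_mul_bsGamma_le hK (mul_pos ht hs.1) hy)
          (betaKernel_nonneg hs)
    _ = √(K * y / (2 * t)) / (2 * √π) * (betaKernel α s / √s) := by rw [hsqrt]; ring

end TimeChange

section QStar

noncomputable def qStarDelta (K α t y : ℝ) : ℝ :=
  (Gamma α * Gamma (1 - α))⁻¹ *
    ∫ s in Ioo (0 : ℝ) 1, betaKernel α s * normCdf (dPlus K (t * s) y)

noncomputable def qStarGamma (K α t y : ℝ) : ℝ :=
  (Gamma α * Gamma (1 - α))⁻¹ *
    ∫ s in Ioo (0 : ℝ) 1, betaKernel α s * bsGamma K (t * s) y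

variable {K α t y : ℝ}

lemma hasDerivAt_qStar (hK : 0 < K) (hα : α ∈ Ioo 0 1) (ht : 0 < t) (hy : 0 < y) :
    HasDerivAt (qStar K α t) (qStarDelta K α t y) y := by
  have hq : qStar K α t = fun x => (Gamma α * Gamma (1 - α))⁻¹ *
      ∫ s in Ioo (0 : ℝ) 1, betaKernel α s * qBS K (t * s) x := by
    ext x; rw [qStar, if_neg ht.ne']; rfl
  rw [hq]
  exact (hasDerivAt_integral_betaKernel_mul_qBS hK hα ht hy).const_mul _

lemma hasDerivAt_qStarDelta (hK : 0 < K) (hα : α ∈ Ioo (1 / 2) 1) (ht : 0 < t) (hy : 0 < y) :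
    HasDerivAt (qStarDelta K α t) (qStarGamma K α t y) y :=
  (hasDerivAt_integral_betaKernel_mul_normCdf hK hα ht hy).const_mul _

lemma continuousOn_qStarGamma (hK : 0 < K) (hα : α ∈ Ioo (1 / 2) 1) (ht : 0 < t) :
    ContinuousOn (qStarGamma K α t) (Ioi 0) := fun _ hy =>
  (continuousAt_const.mul
    (continuousAt_integral_betaKernel_mul_bsGamma hK hα ht hy)).continuousWithinAt

lemma qStarDelta_eq (hK : 0 < K) (ht : 0 < t) (hy : 0 < y) :
    qStarDelta K α t y = (Gamma α * Gamma (1 - α))⁻¹ * ∫ τ in Ioo (0 : ℝ) 1,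
      deriv (fun z => qBS K (τ * t) z) y * τ ^ (α - 1) * (1 - τ) ^ (-α) := by
  refine congrArg _ (setIntegral_congr_fun measurableSet_Ioo fun τ hτ => ?_)
  rw [mul_comm τ t, deriv_qBS hK (mul_pos ht hτ.1) hy, betaKernel]
  ring

lemma qStarGamma_eq (hK : 0 < K) (ht : 0 < t) (hy : 0 < y) :
    qStarGamma K α t y = (Gamma α * Gamma (1 - α))⁻¹ * ∫ τ in Ioo (0 : ℝ) 1,
      deriv (deriv (fun z => qBS K (τ * t) z)) y * τ ^ (α - 1) * (1 - τ) ^ (-α) := by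
  refine congrArg _ (setIntegral_congr_fun measurableSet_Ioo fun τ hτ => ?_)
  rw [mul_comm τ t, deriv_deriv_qBS hK (mul_pos ht hτ.1) hy, betaKernel]
  ring

lemma qStarDelta_mem_Icc (hα : α ∈ Ioo 0 1) : qStarDelta K α t y ∈ Icc 0 1 := by
  have hΓ := Gamma_mul_Gamma_one_sub_pos hα
  refine ⟨mul_nonneg (inv_nonneg.2 hΓ.le) (setIntegral_nonneg measurableSet_Ioo fun s hs =>
    mul_nonneg (betaKernel_nonneg hs) (normCdf_nonneg _)), ?_⟩
  rw [qStarDelta, inv_mul_le_iff₀ hΓ, mul_one]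
  exact setIntegral_betaKernel_mul_normCdf_le hα _

lemma qStarGamma_nonneg (hα : α ∈ Ioo 0 1) (hy : 0 ≤ y) : 0 ≤ qStarGamma K α t y :=
  mul_nonneg (inv_nonneg.2 (Gamma_mul_Gamma_one_sub_pos hα).le)
    (setIntegral_nonneg measurableSet_Ioo fun _ hs =>
      mul_nonneg (betaKernel_nonneg hs) (bsGamma_nonneg hy))

lemma half_sq_mul_qStarGamma_le (hK : 0 < K) (hα : α ∈ Ioo (1 / 2) 1) (ht : 0 < t)
    (hy : 0 < y) :
    y ^ 2 / 2 * qStarGamma K α t y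
      ≤ Gamma (α - 1 / 2) / (2 * π * Gamma α) * √(K * y / (2 * t)) := by
  have hΓα : 0 < Gamma α := Gamma_pos_of_pos (by linarith [hα.1])
  have hΓ1 : 0 < Gamma (1 - α) := Gamma_pos_of_pos (by linarith [hα.2])
  have hsπ : 0 < √π := sqrt_pos.2 pi_pos
  calc y ^ 2 / 2 * qStarGamma K α t y
      = (Gamma α * Gamma (1 - α))⁻¹ *
          (y ^ 2 / 2 * ∫ s in Ioo (0 : ℝ) 1, betaKernel α s * bsGamma K (t * s) y) := by
        rw [qStarGamma]; ring
    _ ≤ (Gamma α * Gamma (1 - α))⁻¹ *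
          (√(K * y / (2 * t)) / (2 * √π) * (Gamma (α - 1 / 2) * Gamma (1 - α) / √π)) := by
        gcongr ?_ * ?_
        exact half_sq_mul_setIntegral_betaKernel_mul_bsGamma_le hK hα ht hy
    _ = Gamma (α - 1 / 2) / (2 * π * Gamma α) * √(K * y / (2 * t)) := by
        rw [show 2 * π * Gamma α = 2 * (√π * √π) * Gamma α by rw [mul_self_sqrt pi_pos.le]]
        field_simp

end QStar

/-- For each `t > 0`, `y ↦ q*(t,y)` is `C²` on `(0,∞)`, with first
and second derivatives obtained by differentiation under the integral sign, and
`0 ≤ ∂_y q* ≤ 1`, `0 ≤ (y²/2)∂²_y q* ≤ (Γ(α−1/2)/(2πΓ(α))) √(Ky/(2t))`. -/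
theorem qStar_space_derivatives
    (K α : ℝ) (hK : 0 < K) (hα : α ∈ Set.Ioo (1 / 2 : ℝ) 1) :
    ∀ t : ℝ, 0 < t →
      ContDiffOn ℝ 2 (fun y => qStar K α t y) (Set.Ioi (0 : ℝ))
      ∧ (∀ y : ℝ, 0 < y →
          deriv (fun z => qStar K α t z) y
            = (Real.Gamma α * Real.Gamma (1 - α))⁻¹ *
                ∫ τ in Set.Ioo (0 : ℝ) 1,
                  deriv (fun z => qBS K (τ * t) z) y * τ ^ (α - 1) * (1 - τ) ^ (-α))
      ∧ (∀ y : ℝ, 0 < y →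
          deriv (deriv (fun z => qStar K α t z)) y
            = (Real.Gamma α * Real.Gamma (1 - α))⁻¹ *
                ∫ τ in Set.Ioo (0 : ℝ) 1,
                  deriv (deriv (fun z => qBS K (τ * t) z)) y * τ ^ (α - 1) * (1 - τ) ^ (-α))
      ∧ (∀ y : ℝ, 0 < y →
          0 ≤ deriv (fun z => qStar K α t z) y ∧ deriv (fun z => qStar K α t z) y ≤ 1)
      ∧ (∀ y : ℝ, 0 < y →
          0 ≤ y ^ 2 / 2 * deriv (deriv (fun z => qStar K α t z)) y
          ∧ y ^ 2 / 2 * deriv (deriv (fun z => qStar K α t z)) y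
              ≤ Real.Gamma (α - 1 / 2) / (2 * Real.pi * Real.Gamma α)
                  * Real.sqrt (K * y / (2 * t))) := by
  intro t ht
  have hα₀ : α ∈ Ioo 0 1 := ⟨by linarith [hα.1], hα.2⟩
  have hD1 : ∀ y ∈ Ioi (0 : ℝ), HasDerivAt (qStar K α t) (qStarDelta K α t y) y :=
    fun y hy => hasDerivAt_qStar hK hα₀ ht hy
  have hD2 : ∀ y ∈ Ioi (0 : ℝ), HasDerivAt (qStarDelta K α t) (qStarGamma K α t y) y :=
    fun y hy => hasDerivAt_qStarDelta hK hα ht hy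
  have hdd : ∀ y ∈ Ioi (0 : ℝ), deriv (deriv (qStar K α t)) y = qStarGamma K α t y :=
    fun y hy => deriv_deriv_eq_of_hasDerivAt isOpen_Ioi hD1 hD2 hy
  refine ⟨contDiffOn_two_of_hasDerivAt isOpen_Ioi hD1 hD2 (continuousOn_qStarGamma hK hα ht),
    fun y hy => ?_, fun y hy => ?_, fun y hy => ?_, fun y hy => ?_⟩
  · rw [(hD1 y hy).deriv, qStarDelta_eq hK ht hy]
  · rw [hdd y hy, qStarGamma_eq hK ht hy]
  · rw [(hD1 y hy).deriv]
    exact qStarDelta_mem_Icc hα₀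
  · rw [hdd y hy]
    exact ⟨mul_nonneg (by positivity) (qStarGamma_nonneg hα₀ hy.le),
      half_sq_mul_qStarGamma_le hK hα ht hy⟩
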